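/- (Five Lemma for n-abelian categories) Let M be an n-abelian category and consider a commuting diagram with rows X⁰ → X¹ → X² → X³ → X⁴ and Y⁰ → Y¹ → Y² → Y³ → Y⁴ and vertical morphisms f⁰,…,f⁴. Assume f¹ and f³ are isomorphisms, f⁰ is an epimorphism, f⁴ is a monomorphism, and for each i = 1,2,3,4 the morphisms d_X^i and d_Y^i are weak cokernels of d_X^{i−1} and d_Y^{i−1} respectively. Then f² is an isomorphism. -/

import Mathlib

open CategoryTheory CategoryTheory.Limits

universe u v u' v'

variable {M : Type u} [Category.{v} M] [Preadditive M]

/-- The `n`-cokernel (right `n`-exactness) condition for an `ℕ`-indexed chain of morphisms: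
applying `Hom(−,Y)` yields an exact sequence `0 → Hom(X^{n+1},Y) → ⋯ → Hom(X⁰,Y)`. -/
def IsRightNExact (n : ℕ) (X : ℕ → M) (d : ∀ i, X i ⟶ X (i+1)) : Prop :=
  ∀ Y : M, Function.Injective (fun g : X (n+1) ⟶ Y => d n ≫ g) ∧
    ∀ j, j + 1 ≤ n → Function.Exact (fun g : X (j+2) ⟶ Y => d (j+1) ≫ g)
      (fun g : X (j+1) ⟶ Y => d j ≫ g)

/-- The `n`-kernel (left `n`-exactness) condition for an `ℕ`-indexed chain of morphisms:
applying `Hom(Y,−)` yields an exact sequence `0 → Hom(Y,X⁰) → ⋯ → Hom(Y,X^{n+1})`. -/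
def IsLeftNExact (n : ℕ) (X : ℕ → M) (d : ∀ i, X i ⟶ X (i+1)) : Prop :=
  ∀ Y : M, Function.Injective (fun g : Y ⟶ X 0 => g ≫ d 0) ∧
    ∀ j, j + 1 ≤ n → Function.Exact (fun g : Y ⟶ X j => g ≫ d j)
      (fun g : Y ⟶ X (j+1) => g ≫ d (j+1))

/-- An `n`-exact sequence: both a left and a right `n`-exact sequence. -/
def IsNExactSeq (n : ℕ) (X : ℕ → M) (d : ∀ i, X i ⟶ X (i+1)) : Prop :=
  IsRightNExact n X d ∧ IsLeftNExact n X d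

/-- Jasso's axioms for an `n`-abelian category (with sequences encoded as `ℕ`-indexed
chains; only the indices `0, …, n+1` are relevant). -/
structure IsNAbelian (n : ℕ) (M : Type u) [Category.{v} M] [Preadditive M] : Prop where
  idem : IsIdempotentComplete M
  hasNCokernels : ∀ ⦃A B : M⦄ (f : A ⟶ B), ∃ (X : ℕ → M) (d : ∀ i, X i ⟶ X (i+1))
    (h0 : X 0 = A) (h1 : X 1 = B), d 0 = eqToHom h0 ≫ f ≫ eqToHom h1.symm ∧
    IsRightNExact n X d
  hasNKernels : ∀ ⦃A B : M⦄ (f : A ⟶ B), ∃ (X : ℕ → M) (d : ∀ i, X i ⟶ X (i+1))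
    (h0 : X n = A) (h1 : X (n+1) = B), d n = eqToHom h0 ≫ f ≫ eqToHom h1.symm ∧
    IsLeftNExact n X d
  a2 : ∀ (X : ℕ → M) (d : ∀ i, X i ⟶ X (i+1)), Mono (d 0) → IsRightNExact n X d →
    IsLeftNExact n X d
  a3 : ∀ (X : ℕ → M) (d : ∀ i, X i ⟶ X (i+1)), Epi (d n) → IsLeftNExact n X d →
    IsRightNExact n X d


/-- A weak cokernel of `f : A ⟶ B` is a morphism `g : B ⟶ C` with `f ≫ g = 0` such that
every `h : B ⟶ X` with `f ≫ h = 0` factors (not necessarily uniquely) through `g`. -/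
def IsWeakCokernel {A B C : M} (f : A ⟶ B) (g : B ⟶ C) : Prop :=
  f ≫ g = 0 ∧ ∀ ⦃X : M⦄ (h : B ⟶ X), f ≫ h = 0 → ∃ t : C ⟶ X, h = g ≫ t

/-!
Since `f⁰` is epi and `f¹` invertible, `(f¹)⁻¹ ≫ d_X¹` vanishes on `d_Y⁰`, so it factors as
`d_Y¹ ≫ g`; then `f² ≫ g - 𝟙` vanishes on `d_X¹` and factors as `d_X² ≫ t`, and
`g - d_Y² ≫ (f³)⁻¹ ≫ t` is a retraction of `f²`. Moreover `f²` is epi: a morphism killed by `f²`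
factors through `d_Y²` and then, via `f³` and `d_X³`, through `d_Y² ≫ (f³)⁻¹ ≫ d_X³`, which is
zero because `f⁴` is mono. A split mono that is epi is an iso.
-/

section FourLemmas

variable {X0 X1 X2 X3 X4 Y0 Y1 Y2 Y3 Y4 : M}
  {dX0 : X0 ⟶ X1} {dX1 : X1 ⟶ X2} {dX2 : X2 ⟶ X3} {dX3 : X3 ⟶ X4}
  {dY0 : Y0 ⟶ Y1} {dY1 : Y1 ⟶ Y2} {dY2 : Y2 ⟶ Y3} {dY3 : Y3 ⟶ Y4}
  {f0 : X0 ⟶ Y0} {f1 : X1 ⟶ Y1} {f2 : X2 ⟶ Y2} {f3 : X3 ⟶ Y3} {f4 : X4 ⟶ Y4}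

theorem isSplitMono_of_epi_of_isIso_of_isSplitMono
    (sq0 : dX0 ≫ f1 = f0 ≫ dY0) (sq1 : dX1 ≫ f2 = f1 ≫ dY1) (sq2 : dX2 ≫ f3 = f2 ≫ dY2)
    (hX1 : dX0 ≫ dX1 = 0) (hY1 : IsWeakCokernel dY0 dY1) (hX2 : IsWeakCokernel dX1 dX2)
    [Epi f0] [IsIso f1] [IsSplitMono f3] : IsSplitMono f2 := by
  obtain ⟨g, hg⟩ := hY1.2 (inv f1 ≫ dX1) (by
    rw [← cancel_epi f0, ← Category.assoc, ← sq0, Category.assoc, IsIso.hom_inv_id_assoc, hX1,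
      comp_zero])
  obtain ⟨t, ht⟩ := hX2.2 (f2 ≫ g - 𝟙 X2) (by
    rw [Preadditive.comp_sub, reassoc_of% sq1, ← hg, IsIso.hom_inv_id_assoc, Category.comp_id,
      sub_self])
  refine IsSplitMono.mk' ⟨g - dY2 ≫ retraction f3 ≫ t, ?_⟩
  calc f2 ≫ (g - dY2 ≫ retraction f3 ≫ t)
      = f2 ≫ g - dX2 ≫ (f3 ≫ retraction f3) ≫ t := by
        rw [Preadditive.comp_sub, ← reassoc_of% sq2, Category.assoc]
    _ = 𝟙 X2 := by rw [IsSplitMono.id, Category.id_comp, ← ht, sub_sub_cancel]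

theorem epi_of_epi_of_isSplitEpi_of_mono
    (sq1 : dX1 ≫ f2 = f1 ≫ dY1) (sq2 : dX2 ≫ f3 = f2 ≫ dY2) (sq3 : dX3 ≫ f4 = f3 ≫ dY3)
    (hY2 : IsWeakCokernel dY1 dY2) (hX3 : IsWeakCokernel dX2 dX3) (hY3 : dY2 ≫ dY3 = 0)
    [Epi f1] [IsSplitEpi f3] [Mono f4] : Epi f2 := by
  refine Preadditive.epi_of_cancel_zero _ fun {Z} h hh => ?_
  obtain ⟨k, rfl⟩ := hY2.2 h (by
    rw [← cancel_epi f1, ← reassoc_of% sq1, hh, comp_zero, comp_zero])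
  obtain ⟨w, hw⟩ := hX3.2 (f3 ≫ k) (by rw [reassoc_of% sq2, hh])
  have hzero : dY2 ≫ section_ f3 ≫ dX3 = 0 := by
    rw [← cancel_mono f4, Category.assoc, Category.assoc, sq3, IsSplitEpi.id_assoc, hY3,
      zero_comp]
  calc dY2 ≫ k = dY2 ≫ section_ f3 ≫ f3 ≫ k := by rw [IsSplitEpi.id_assoc]
    _ = (dY2 ≫ section_ f3 ≫ dX3) ≫ w := by rw [hw]; simp only [Category.assoc]
    _ = 0 := by rw [hzero, zero_comp]

end FourLemmas

theorem five_lemma_nAbelian_general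
    {X0 X1 X2 X3 X4 Y0 Y1 Y2 Y3 Y4 : M}
    (dX0 : X0 ⟶ X1) (dX1 : X1 ⟶ X2) (dX2 : X2 ⟶ X3) (dX3 : X3 ⟶ X4)
    (dY0 : Y0 ⟶ Y1) (dY1 : Y1 ⟶ Y2) (dY2 : Y2 ⟶ Y3) (dY3 : Y3 ⟶ Y4)
    (f0 : X0 ⟶ Y0) (f1 : X1 ⟶ Y1) (f2 : X2 ⟶ Y2) (f3 : X3 ⟶ Y3) (f4 : X4 ⟶ Y4)
    (sq0 : dX0 ≫ f1 = f0 ≫ dY0) (sq1 : dX1 ≫ f2 = f1 ≫ dY1)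
    (sq2 : dX2 ≫ f3 = f2 ≫ dY2) (sq3 : dX3 ≫ f4 = f3 ≫ dY3)
    (hf1 : IsIso f1) (hf3 : IsIso f3) (hf0 : Epi f0) (hf4 : Mono f4)
    (hX1 : IsWeakCokernel dX0 dX1) (hX2 : IsWeakCokernel dX1 dX2)
    (hX3 : IsWeakCokernel dX2 dX3)
    (hY1 : IsWeakCokernel dY0 dY1) (hY2 : IsWeakCokernel dY1 dY2)
    (hY3 : IsWeakCokernel dY2 dY3) :
    IsIso f2 := by
  have := isSplitMono_of_epi_of_isIso_of_isSplitMono sq0 sq1 sq2 hX1.1 hY1 hX2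
  have := epi_of_epi_of_isSplitEpi_of_mono sq1 sq2 sq3 hY2 hX3 hY3.1
  exact isIso_of_epi_of_isSplitMono f2

/-- The five lemma for `n`-abelian categories. -/
theorem five_lemma_nAbelian
    (n : ℕ) (hn : 1 ≤ n) (hM : IsNAbelian n M)
    {X0 X1 X2 X3 X4 Y0 Y1 Y2 Y3 Y4 : M}
    (dX0 : X0 ⟶ X1) (dX1 : X1 ⟶ X2) (dX2 : X2 ⟶ X3) (dX3 : X3 ⟶ X4)
    (dY0 : Y0 ⟶ Y1) (dY1 : Y1 ⟶ Y2) (dY2 : Y2 ⟶ Y3) (dY3 : Y3 ⟶ Y4)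
    (f0 : X0 ⟶ Y0) (f1 : X1 ⟶ Y1) (f2 : X2 ⟶ Y2) (f3 : X3 ⟶ Y3) (f4 : X4 ⟶ Y4)
    (sq0 : dX0 ≫ f1 = f0 ≫ dY0) (sq1 : dX1 ≫ f2 = f1 ≫ dY1)
    (sq2 : dX2 ≫ f3 = f2 ≫ dY2) (sq3 : dX3 ≫ f4 = f3 ≫ dY3)
    (hf1 : IsIso f1) (hf3 : IsIso f3) (hf0 : Epi f0) (hf4 : Mono f4)
    (hX1 : IsWeakCokernel dX0 dX1) (hX2 : IsWeakCokernel dX1 dX2)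
    (hX3 : IsWeakCokernel dX2 dX3)
    (hY1 : IsWeakCokernel dY0 dY1) (hY2 : IsWeakCokernel dY1 dY2)
    (hY3 : IsWeakCokernel dY2 dY3) :
    IsIso f2 :=
  five_lemma_nAbelian_general dX0 dX1 dX2 dX3 dY0 dY1 dY2 dY3 f0 f1 f2 f3 f4 sq0 sq1 sq2 sq3 hf1 hf3
    hf0 hf4 hX1 hX2 hX3 hY1 hY2 hY3
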